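/- Let φ : H → G be a group homomorphism whose range φ(H) is a proper subgroup of G that is either of finite index in G or normal in G. Then the induced map on conjugacy classes conj(H) → conj(G) is not surjective; that is, there is a conjugacy class of G containing no element of the form g·φ(h)·g⁻¹. -/

import Mathlib

/-!
In the normal case every element outside `φ(H)` works, since a normal subgroup is a union of
conjugacy classes. In the finite-index case, `G` acts transitively on the finite set `G ⧸ φ(H)`
with at least two points, and by Jordan's lemma some `g : G` fixes no coset `x φ(H)`, i.e.
`x⁻¹ g x ∉ φ(H)` for all `x`. Jordan's lemma reduces, via the finite image of `G` in the
permutations of the cosets, to finite groups, where it is Burnside's counting lemma: the average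
number of fixed points is the number of orbits, `1`, while the identity alone fixes at least two.
-/

namespace MulAction

variable {M X : Type*} [Group M] [MulAction M X] [IsPretransitive M X] [Nontrivial X]

theorem exists_forall_smul_ne_of_finite [Finite M] : ∃ m : M, ∀ x : X, m • x ≠ x := by
  classical
  have : Fintype M := Fintype.ofFinite M
  have : Finite X := Finite.of_surjective _ (surjective_smul M (Classical.arbitrary X))
  have : Fintype X := Fintype.ofFinite X
  have one_orbit : Fintype.card (orbitRel.Quotient M X) = 1 :=
    (Fintype.card_le_one_iff_subsingleton.mpr
      ((pretransitive_iff_subsingleton_quotient M X).mp inferInstance)).antisymm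
      (Fintype.card_pos_iff.mpr ⟨Quotient.mk'' (Classical.arbitrary X)⟩)
  by_contra! hfix
  refine lt_irrefl (Fintype.card M) ?_
  calc Fintype.card M = ∑ _ : M, 1 := by simp
    _ < ∑ m : M, Fintype.card (fixedBy X m) := by
      refine Finset.sum_lt_sum (fun m _ => Fintype.card_pos_iff.mpr ?_)
        ⟨1, Finset.mem_univ _, ?_⟩
      · obtain ⟨x, hx⟩ := hfix m
        exact ⟨⟨x, hx⟩⟩
      · simpa [fixedBy_one_eq_univ] using Fintype.one_lt_card
    _ = Fintype.card M := by
      rw [sum_card_fixedBy_eq_card_orbits_mul_card_group, one_orbit, one_mul]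

theorem exists_forall_smul_ne [Finite X] : ∃ m : M, ∀ x : X, m • x ≠ x := by
  have : IsPretransitive (toPermHom M X).range X :=
    ⟨fun x y => let ⟨m, hm⟩ := exists_smul_eq M x y; ⟨⟨toPerm m, m, rfl⟩, hm⟩⟩
  obtain ⟨⟨_, m, rfl⟩, hm⟩ :=
    exists_forall_smul_ne_of_finite (M := (toPermHom M X).range) (X := X)
  exact ⟨m, hm⟩

end MulAction

namespace Subgroup

variable {G : Type*} [Group G] {K : Subgroup G}

theorem exists_forall_not_isConj_of_finite_quotient [Finite (G ⧸ K)] (hK : K ≠ ⊤) :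
    ∃ g : G, ∀ k ∈ K, ¬ IsConj k g := by
  have : Nontrivial (G ⧸ K) := QuotientGroup.nontrivial_iff.mpr hK
  obtain ⟨g, hg⟩ := MulAction.exists_forall_smul_ne (M := G) (X := G ⧸ K)
  refine ⟨g, fun k hk hconj => ?_⟩
  obtain ⟨c, rfl⟩ := isConj_iff.mp hconj
  exact hg c (QuotientGroup.eq.mpr (by simpa [mul_assoc] using hk))

theorem Normal.exists_forall_not_isConj (hN : K.Normal) (hK : K ≠ ⊤) :
    ∃ g : G, ∀ k ∈ K, ¬ IsConj k g := by
  obtain ⟨g, hg⟩ := SetLike.exists_not_mem_of_ne_top K hK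
  refine ⟨g, fun k hk hconj => hg ?_⟩
  obtain ⟨c, rfl⟩ := isConj_iff.mp hconj
  exact hN.conj_mem k hk c

end Subgroup

theorem ConjClasses.map_not_surjective_of_forall_not_isConj {H G : Type*} [Group H] [Group G]
    (φ : H →* G) {g : G} (hg : ∀ k ∈ φ.range, ¬ IsConj k g) :
    ¬ Function.Surjective (ConjClasses.map φ) := by
  intro hφ
  obtain ⟨c, hc⟩ := hφ (ConjClasses.mk g)
  obtain ⟨h, rfl⟩ := ConjClasses.mk_surjective c
  exact hg (φ h) ⟨h, rfl⟩ (ConjClasses.mk_eq_mk_iff_isConj.mp hc)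

/-- Let `φ : H →* G` be a group homomorphism whose range is a proper subgroup
of `G` that is either of finite index in `G` or normal in `G`. Then the induced map on conjugacy
classes `conj(H) → conj(G)` is not surjective. -/
theorem conjClasses_map_not_surjective {H G : Type*} [Group H] [Group G] (φ : H →* G)
    (hne : φ.range ≠ ⊤) (hfin_or_norm : Finite (G ⧸ φ.range) ∨ φ.range.Normal) :
    ¬ Function.Surjective (ConjClasses.map φ) := by
  obtain ⟨g, hg⟩ : ∃ g : G, ∀ k ∈ φ.range, ¬ IsConj k g := by
    rcases hfin_or_norm with hfin | hnormal
    · exact Subgroup.exists_forall_not_isConj_of_finite_quotient hne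
    · exact hnormal.exists_forall_not_isConj hne
  exact ConjClasses.map_not_surjective_of_forall_not_isConj φ hg
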